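/- arXiv:1712.02648 — 3 statements merged into one kernel-verified Lean document; each statement's English description precedes it below -/
import Mathlib

section
/- Suppose 1 ≤ R < m and Σ_{k≥1} μ_k R^{−k} < ∞, so that T is a bounded linear operator on ℓ²_R. Then every complex number λ with |λ| ≤ R belongs to the spectrum of T. (Together with the characterization for |λ| > R, this determines the spectrum of T completely.) -/
open scoped BigOperators ENNReal

noncomputable section

abbrev H2 : Type := lp (fun _ : ℕ => ℂ) 2

/-- the vector `v = (m^{-k} 1[k ≥ 1])_k` -/
def vSeq (m : ℝ) : ℕ → ℂ := fun k => if k = 0 then 0 else ((m : ℂ))⁻¹ ^ k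

/-- the shift `S` -/
def shiftSeq (a : ℕ → ℂ) : ℕ → ℂ := fun k => if k = 0 then 0 else a (k - 1)

/-- the terms of the series defining `χ(a)` -/
def chiSum (μ : ℕ → ℝ) (a : ℕ → ℂ) : ℕ → ℂ := fun k => (μ (k+1) : ℂ) * (a (k+1) - a k)

/-- the linear functional `χ` -/
def chiSeq (μ : ℕ → ℝ) (a : ℕ → ℂ) : ℂ := ∑' k, chiSum μ a k

/-- the operator `T = S + χ(·) v` -/
def Tseq (μ : ℕ → ℝ) (m : ℝ) (a : ℕ → ℂ) : ℕ → ℂ :=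
  fun k => shiftSeq a k + chiSeq μ a * vSeq m k

/-- membership in `ℓ²_R` -/
def memEllR (R : ℝ) (a : ℕ → ℂ) : Prop :=
  Summable fun k => R ^ (2 * k) * ‖a k‖ ^ 2

/-- from the standard `ℓ²` model to an `ℓ²_R` sequence -/
def fromModel (R : ℝ) (b : ℕ → ℂ) : ℕ → ℂ := fun k => ((R : ℂ))⁻¹ ^ k * b k

/-- from an `ℓ²_R` sequence to its standard `ℓ²` model -/
def toModel (R : ℝ) (a : ℕ → ℂ) : ℕ → ℂ := fun k => (R : ℂ) ^ k * a k

/-- the generating function `μ̂(z) = Σ_{k≥1} μ_k z^k` -/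
def genFun (μ : ℕ → ℝ) (z : ℂ) : ℂ := ∑' k, (μ (k+1) : ℂ) * z ^ (k+1)

/-- `T'` is the bounded operator on the standard `ℓ²` model corresponding to `T` on `ℓ²_R`
under the isometric isomorphism `(a_k)_k ↦ (R^k a_k)_k`. -/
def Intertwines (μ : ℕ → ℝ) (m R : ℝ) (T' : H2 →L[ℂ] H2) : Prop :=
  ∀ b : H2, ∀ k, (T' b : ℕ → ℂ) k = toModel R (Tseq μ m (fromModel R (b : ℕ → ℂ))) k


/-! On the model space `ℓ²`, `T'` is `R • S` plus a rank-one operator, `S` being the right shift.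
For `‖λ‖ ≤ R` the operator `λ - R • S` is injective but not surjective: a preimage `b` of `e₀`
satisfies `λ b₀ = 1` and `λ b_{k+1} = R b_k`, so `‖b_k‖ ≥ ‖b₀‖ > 0` for all `k`. Since a
rank-one perturbation of an injective, non-surjective operator is never surjective (its index
stays `-1`), `λ - T'` is not invertible. -/

theorem LinearMap.surjective_of_surjective_of_range_sub_le_span_singleton
    {K V W : Type*} [Field K] [AddCommGroup V] [Module K V] [AddCommGroup W] [Module K W]
    {A B : V →ₗ[K] W} {u : W} (hA : Function.Surjective A) (hB : Function.Injective B)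
    (hAB : LinearMap.range (A - B) ≤ K ∙ u) : Function.Surjective B := by
  have hdiff (x : V) : ∃ a : K, B x = A x - a • u := by
    obtain ⟨a, ha⟩ := Submodule.mem_span_singleton.mp (hAB (LinearMap.mem_range_self _ x))
    exact ⟨a, by rw [ha]; simp⟩
  intro y
  obtain ⟨p, rfl⟩ := hA y
  obtain ⟨q, hq⟩ := hA u
  obtain ⟨α, hα⟩ := hdiff p
  obtain ⟨β, hβ⟩ := hdiff q
  by_cases hβ1 : β = 1
  · have hq0 : q = 0 := hB (by rw [hβ, hq, hβ1, one_smul, sub_self, map_zero])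
    rw [hq0, map_zero] at hq
    exact ⟨p, by rw [hα, ← hq, smul_zero, sub_zero]⟩
  · -- `t := α / (1 - β)` makes the `u`-components of `B (p + t • q)` cancel.
    refine ⟨p + (α / (1 - β)) • q, ?_⟩
    have hscalar : α / (1 - β) - α - α / (1 - β) * β = 0 := by
      field_simp [sub_ne_zero.mpr (Ne.symm hβ1)]; ring
    rw [map_add, map_smul, hα, hβ, hq]
    linear_combination (norm := module) hscalar • u

theorem memℓp_two_iff_summable_sq {ι E : Type*} [NormedAddCommGroup E] {f : ι → E} :
    Memℓp f 2 ↔ Summable fun i => ‖f i‖ ^ 2 := by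
  rw [memℓp_gen_iff (by norm_num)]
  norm_num

theorem memℓp_shiftSeq {a : ℕ → ℂ} (ha : Memℓp a 2) : Memℓp (shiftSeq a) 2 := by
  rw [memℓp_two_iff_summable_sq] at ha ⊢
  exact (summable_nat_add_iff 1).mp (by simpa [shiftSeq] using ha)

def shiftLp : H2 →ₗ[ℂ] H2 where
  toFun b := ⟨shiftSeq b, memℓp_shiftSeq b.2⟩
  map_add' b c := lp.ext <| funext fun k => by
    change shiftSeq _ k = shiftSeq b k + shiftSeq c k
    by_cases hk : k = 0 <;> simp [shiftSeq, hk]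
  map_smul' a b := lp.ext <| funext fun k => by
    change shiftSeq _ k = a * shiftSeq b k
    by_cases hk : k = 0 <;> simp [shiftSeq, hk]

@[simp]
theorem coe_shiftLp (b : H2) : ⇑(shiftLp b) = shiftSeq b := rfl

theorem injective_smul_sub_smul_shiftLp (lam : ℂ) {c : ℂ} (hc : c ≠ 0) :
    Function.Injective (lam • LinearMap.id - c • shiftLp : H2 →ₗ[ℂ] H2) := by
  rw [injective_iff_map_eq_zero]
  intro b hb
  have h (k : ℕ) : lam * b k = c * shiftSeq b k := by
    have := congrArg (fun x : H2 => x k) hb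
    simp only [LinearMap.sub_apply, LinearMap.smul_apply, LinearMap.id_apply, lp.coeFn_sub,
      lp.coeFn_smul, coe_shiftLp, Pi.sub_apply, Pi.smul_apply, smul_eq_mul, lp.coeFn_zero,
      Pi.zero_apply] at this
    exact sub_eq_zero.mp this
  refine lp.ext <| funext fun k => ?_
  by_cases hlam : lam = 0
  · simpa [shiftSeq, hlam, hc] using h (k + 1)
  · induction k with
    | zero => simpa [shiftSeq, hlam] using h 0
    | succ k ih => simpa [shiftSeq, hlam, ih] using h (k + 1)

theorem single_zero_notMem_range_smul_sub_smul_shiftLp {lam c : ℂ} (hlam : ‖lam‖ ≤ ‖c‖) :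
    (lp.single 2 0 1 : H2) ∉ LinearMap.range (lam • LinearMap.id - c • shiftLp : H2 →ₗ[ℂ] H2) := by
  rintro ⟨b, hb⟩
  have h (k : ℕ) : lam * b k - c * shiftSeq b k = (lp.single 2 0 1 : H2) k := by
    rw [← hb]; rfl
  have h0 : lam * b 0 = 1 := by simpa [shiftSeq] using h 0
  have hlam0 : lam ≠ 0 := left_ne_zero_of_mul_eq_one h0
  have hmono (k : ℕ) : ‖b 0‖ ≤ ‖b k‖ := by
    induction k with
    | zero => rfl
    | succ k ih =>
      have hrec : lam * b (k + 1) = c * b k := by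
        simpa [shiftSeq, sub_eq_zero, lp.single_apply] using h (k + 1)
      refine ih.trans (le_of_mul_le_mul_left ?_ (norm_pos_iff.mpr hlam0))
      calc ‖lam‖ * ‖b k‖ ≤ ‖c‖ * ‖b k‖ := by gcongr
        _ = ‖lam‖ * ‖b (k + 1)‖ := by rw [← norm_mul, ← norm_mul, hrec]
  have hsq : ‖b 0‖ ^ 2 ≤ 0 :=
    ge_of_tendsto' (memℓp_two_iff_summable_sq.mp b.2).tendsto_atTop_zero fun k => by
      gcongr; exact hmono k
  exact right_ne_zero_of_mul_eq_one h0 (by simpa using hsq)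

theorem memℓp_toModel_vSeq {m R : ℝ} (hR : 0 ≤ R) (hRm : R < m) :
    Memℓp (toModel R (vSeq m)) 2 := by
  have hm : 0 < m := hR.trans_lt hRm
  have hq : (R / m) ^ 2 < 1 := pow_lt_one₀ (by positivity) ((div_lt_one hm).mpr hRm) two_ne_zero
  rw [memℓp_two_iff_summable_sq]
  refine (summable_geometric_of_lt_one (by positivity) hq).of_nonneg_of_le
    (fun _ => by positivity) fun k => ?_
  rcases k with _ | k
  · simp [toModel, vSeq]
  · refine le_of_eq ?_
    simp only [toModel, vSeq, Nat.add_eq_zero_iff, one_ne_zero, and_false, ↓reduceIte, inv_pow,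
      Complex.norm_mul, norm_pow, Complex.norm_real, Real.norm_eq_abs, abs_of_nonneg hR, norm_inv,
      abs_of_pos hm]
    ring

theorem Intertwines.apply_eq {μ : ℕ → ℝ} {m R : ℝ} (hR : R ≠ 0) {T' : H2 →L[ℂ] H2}
    (hT' : Intertwines μ m R T') {u : H2} (hu : ⇑u = toModel R (vSeq m)) (b : H2) :
    T' b = (R : ℂ) • shiftLp b + chiSeq μ (fromModel R b) • u := by
  have hRc : (R : ℂ) ≠ 0 := by exact_mod_cast hR
  refine lp.ext <| funext fun k => ?_
  rw [hT' b k, lp.coeFn_add, lp.coeFn_smul, lp.coeFn_smul, hu]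
  rcases k with _ | k
  · simp [toModel, Tseq, shiftSeq, vSeq]
  · simp only [toModel, Tseq, shiftSeq, fromModel, Pi.add_apply, Pi.smul_apply, coe_shiftLp,
      smul_eq_mul, Nat.add_sub_cancel, if_neg (Nat.succ_ne_zero k)]
    have hpow : (R : ℂ) ^ k * (R : ℂ)⁻¹ ^ k = 1 := by rw [← mul_pow, mul_inv_cancel₀ hRc, one_pow]
    linear_combination (R * b k) * hpow

theorem Intertwines.range_sub_le_span {μ : ℕ → ℝ} {m R : ℝ} (hR : R ≠ 0) {T' : H2 →L[ℂ] H2}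
    (hT' : Intertwines μ m R T') {u : H2} (hu : ⇑u = toModel R (vSeq m)) (lam : ℂ) :
    LinearMap.range (((algebraMap ℂ (H2 →L[ℂ] H2) lam - T' : H2 →L[ℂ] H2) : H2 →ₗ[ℂ] H2) -
      (lam • LinearMap.id - (R : ℂ) • shiftLp : H2 →ₗ[ℂ] H2)) ≤ ℂ ∙ u := by
  rintro _ ⟨b, rfl⟩
  refine Submodule.mem_span_singleton.mpr ⟨-chiSeq μ (fromModel R b), ?_⟩
  simp only [LinearMap.sub_apply, LinearMap.smul_apply, LinearMap.id_apply,
    ContinuousLinearMap.coe_coe, sub_apply, ContinuousLinearMap.algebraMap_apply,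
    hT'.apply_eq hR hu b]
  module

theorem statement3_general
    (μ : ℕ → ℝ) (m R : ℝ)
    (hR1 : 1 ≤ R) (hRm : R < m)
    (T' : H2 →L[ℂ] H2) (hT' : Intertwines μ m R T')
    (lam : ℂ) (hlam : ‖lam‖ ≤ R) :
    lam ∈ spectrum ℂ T' := by
  have hR : 0 < R := one_pos.trans_le hR1
  let u : H2 := ⟨toModel R (vSeq m), memℓp_toModel_vSeq hR.le hRm⟩
  rw [spectrum.mem_iff]
  intro hunit
  have hsurj : Function.Surjective (lam • LinearMap.id - (R : ℂ) • shiftLp : H2 →ₗ[ℂ] H2) :=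
    LinearMap.surjective_of_surjective_of_range_sub_le_span_singleton
      (ContinuousLinearMap.isUnit_iff_bijective.mp hunit).2
      (injective_smul_sub_smul_shiftLp lam (by exact_mod_cast hR.ne'))
      (hT'.range_sub_le_span hR.ne' (u := u) rfl lam)
  exact single_zero_notMem_range_smul_sub_smul_shiftLp
    (hlam.trans_eq (Complex.norm_of_nonneg hR.le).symm) (hsurj _)

/-- Under the standing hypotheses, every `λ` with `|λ| ≤ R` belongs to the
spectrum of `T` on `ℓ²_R`. -/
theorem statement3
    (μ : ℕ → ℝ) (m R : ℝ)
    (hm : 1 < m) (hμnn : ∀ k, 0 ≤ μ k)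
    (hμm : HasSum (fun k : ℕ => μ (k + 1) * (m⁻¹) ^ (k + 1)) 1)
    (hR1 : 1 ≤ R) (hRm : R < m)
    (hμR : Summable fun k : ℕ => μ (k + 1) * (R⁻¹) ^ (k + 1))
    (T' : H2 →L[ℂ] H2) (hT' : Intertwines μ m R T')
    (lam : ℂ) (hlam : ‖lam‖ ≤ R) :
    lam ∈ spectrum ℂ T' :=
  statement3_general μ m R hR1 hRm T' hT' lam hlam
end
end

section
/- Suppose 1 ≤ R < m and Σ_{k≥1} μ_k R^{−k} < ∞. Let λ be complex with |λ| > R, λ ≠ m, and μ̂(1/λ) = 1. Define the sequence d(λ) := ( k·λ^{−k−1}/(m−λ) − (λ^{−k} − m^{−k})/(m−λ)² )_{k≥0}. Then d(λ) ∈ ℓ²_R and χ(d(λ)) = (1−λ)·μ̂'(1/λ) / ( (m−λ)·λ² ), where μ̂'(w) := Σ_{k≥1} k·μ_k·w^{k−1}. -/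
/-! With `w = λ⁻¹`, `u = m⁻¹` and `c = m - λ` one has `d_k = k w^{k+1}/c - (w^k - u^k)/c²`.
Then `R^k d_k` is a combination of `k (Rw)^k`, `(Rw)^k` and `(Ru)^k` with `|Rw|, |Ru| < 1`, so it
lies in `ℓ¹ ⊂ ℓ²`. The increment `d_{k+1} - d_k` is a combination of `(k+1) w^k`, `w^k` and `u^k`;
summed against `μ_{k+1}` these give `μ̂'(w)`, `μ̂(w)/w = λ` and `μ̂(u)/u = m`, and the last two
contributions cancel because `c = u⁻¹ - w⁻¹`. -/

open scoped BigOperators ENNReal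

noncomputable section

/-- the derivative `μ̂'(w) = Σ_{k≥1} k μ_k w^{k-1}` -/
def dgenFun (μ : ℕ → ℝ) (w : ℂ) : ℂ := ∑' k, ((k + 1 : ℕ) : ℂ) * (μ (k + 1) : ℂ) * w ^ k

section Memℓp

variable {R : Type*} [NormedRing R] {r : R} {p : ℝ≥0∞}

theorem memℓp_natCast_pow_mul_geometric (k : ℕ) (hr : ‖r‖ < 1) (hp : 1 ≤ p) :
    Memℓp (fun n : ℕ => (n : R) ^ k * r ^ n) p :=
  (memℓp_gen (p := 1) (by simpa using summable_norm_pow_mul_geometric_of_norm_lt_one k hr))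
    |>.of_exponent_ge hp

theorem memℓp_geometric (hr : ‖r‖ < 1) (hp : 1 ≤ p) : Memℓp (fun n : ℕ => r ^ n) p := by
  simpa using memℓp_natCast_pow_mul_geometric 0 hr hp

end Memℓp

theorem memEllR_iff_memℓp_toModel {R : ℝ} (hR : 0 ≤ R) {a : ℕ → ℂ} :
    memEllR R a ↔ Memℓp (toModel R a) 2 := by
  rw [memℓp_gen_iff (by norm_num), memEllR]
  refine summable_congr fun k => ?_
  simp only [toModel, norm_mul, norm_pow, Complex.norm_real, Real.norm_of_nonneg hR]
  norm_num [mul_pow, ← pow_mul, mul_comm]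

/-- The sequence `d(λ)` of the theorem, written with `w = λ⁻¹`, `u = m⁻¹` and `c = m - λ`. -/
def dSeq (w u c : ℂ) (k : ℕ) : ℂ := k * w ^ (k + 1) / c - (w ^ k - u ^ k) / c ^ 2

theorem norm_ofReal_mul_lt_one {R : ℝ} (hR : 0 < R) {z : ℂ} (hz : ‖z‖ < R⁻¹) :
    ‖(R : ℂ) * z‖ < 1 := by
  rw [norm_mul, Complex.norm_real, Real.norm_of_nonneg hR.le]
  exact (lt_inv_mul_iff₀ hR).1 (by rwa [mul_one])

theorem memEllR_dSeq {R : ℝ} (hR : 0 < R) {w u : ℂ} (hw : ‖w‖ < R⁻¹) (hu : ‖u‖ < R⁻¹)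
    (c : ℂ) : memEllR R (dSeq w u c) := by
  have hRw := norm_ofReal_mul_lt_one hR hw
  have hRu := norm_ofReal_mul_lt_one hR hu
  have hmodel : toModel R (dSeq w u c) = fun k : ℕ => w / c * ((k : ℂ) ^ 1 * (R * w) ^ k)
      - (c ^ 2)⁻¹ * ((R * w) ^ k - (R * u) ^ k) := by
    funext k
    simp only [toModel, dSeq]
    ring
  rw [memEllR_iff_memℓp_toModel hR.le, hmodel]
  refine ((memℓp_natCast_pow_mul_geometric 1 hRw ?_).const_mul _).sub
    (((memℓp_geometric hRw ?_).sub (memℓp_geometric hRu ?_)).const_mul _) <;> norm_num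

theorem hasSum_mul_pow_of_hasSum_mul_pow_succ {f : ℕ → ℂ} {z s : ℂ} (hz : z ≠ 0)
    (h : HasSum (fun k : ℕ => f k * z ^ (k + 1)) s) :
    HasSum (fun k : ℕ => f k * z ^ k) (s / z) := by
  simpa [pow_succ, mul_div_assoc, mul_div_cancel_right₀ _ hz] using h.div_const z

section PowerSeries

variable {μ : ℕ → ℝ} {R : ℝ}

theorem summable_genFun_terms (hμ : ∀ k, 0 ≤ μ k)
    (hμR : Summable fun k : ℕ => μ (k + 1) * R⁻¹ ^ (k + 1)) {z : ℂ} (hz : ‖z‖ ≤ R⁻¹) :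
    Summable fun k : ℕ => (μ (k + 1) : ℂ) * z ^ (k + 1) := by
  refine Summable.of_norm_bounded hμR fun k => ?_
  rw [norm_mul, norm_pow, Complex.norm_real, Real.norm_of_nonneg (hμ _)]
  gcongr
  exact hμ _

theorem summable_dgenFun_terms (hμ : ∀ k, 0 ≤ μ k)
    (hμR : Summable fun k : ℕ => μ (k + 1) * R⁻¹ ^ (k + 1)) (hR : 0 < R) {w : ℂ}
    (hw : ‖w‖ < R⁻¹) :
    Summable fun k : ℕ => ((k + 1 : ℕ) : ℂ) * (μ (k + 1) : ℂ) * w ^ k := by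
  set s := R * ‖w‖
  have hs : ‖s‖ < 1 := by simpa [s] using norm_ofReal_mul_lt_one hR hw
  have hgeom : Summable fun k : ℕ => ((k : ℝ) ^ 1 * s ^ k + s ^ k) :=
    (summable_pow_mul_geometric_of_norm_lt_one 1 hs).add (summable_geometric_of_norm_lt_one hs)
  refine Summable.of_norm_bounded (hgeom.mul_left ((∑' j, μ (j + 1) * R⁻¹ ^ (j + 1)) * R))
    fun k => ?_
  have hμk : μ (k + 1) * R⁻¹ ^ (k + 1) ≤ ∑' j, μ (j + 1) * R⁻¹ ^ (j + 1) :=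
    hμR.le_tsum k fun j _ => mul_nonneg (hμ _) (by positivity)
  calc ‖((k + 1 : ℕ) : ℂ) * (μ (k + 1) : ℂ) * w ^ k‖
      = μ (k + 1) * R⁻¹ ^ (k + 1) * R * ((k : ℝ) ^ 1 * s ^ k + s ^ k) := by
        rw [norm_mul, norm_mul, norm_pow, Complex.norm_natCast, Complex.norm_real,
          Real.norm_of_nonneg (hμ _)]
        simp only [s, mul_pow, inv_pow]
        field_simp
        push_cast
        ring
    _ ≤ _ := by gcongr

end PowerSeries

theorem chiSum_dSeq (μ : ℕ → ℝ) (w u c : ℂ) (k : ℕ) :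
    chiSum μ (dSeq w u c) k = (w ^ 2 - w) / c * (((k + 1 : ℕ) : ℂ) * μ (k + 1) * w ^ k)
      + (w / c - (w - 1) / c ^ 2) * (μ (k + 1) * w ^ k)
      + (u - 1) / c ^ 2 * (μ (k + 1) * u ^ k) := by
  simp only [chiSum, dSeq]
  push_cast
  ring

theorem hasSum_chiSum_dSeq {μ : ℕ → ℝ} {w u c D : ℂ} (hw : w ≠ 0) (hu : u ≠ 0)
    (hc : c = u⁻¹ - w⁻¹) (hc0 : c ≠ 0)
    (hD : HasSum (fun k : ℕ => ((k + 1 : ℕ) : ℂ) * μ (k + 1) * w ^ k) D)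
    (hμw : HasSum (fun k : ℕ => (μ (k + 1) : ℂ) * w ^ (k + 1)) 1)
    (hμu : HasSum (fun k : ℕ => (μ (k + 1) : ℂ) * u ^ (k + 1)) 1) :
    HasSum (chiSum μ (dSeq w u c)) ((w ^ 2 - w) / c * D) := by
  have hsum := ((hD.mul_left ((w ^ 2 - w) / c)).add
    ((hasSum_mul_pow_of_hasSum_mul_pow_succ hw hμw).mul_left (w / c - (w - 1) / c ^ 2))).add
    ((hasSum_mul_pow_of_hasSum_mul_pow_succ hu hμu).mul_left ((u - 1) / c ^ 2))
  have hvalue : (w ^ 2 - w) / c * D = (w ^ 2 - w) / c * D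
      + (w / c - (w - 1) / c ^ 2) * (1 / w) + (u - 1) / c ^ 2 * (1 / u) := by
    field_simp
    rw [hc]
    field_simp
    ring
  rw [funext (chiSum_dSeq μ w u c), hvalue]
  exact hsum

theorem statement14_general
    (μ : ℕ → ℝ) (m R : ℝ)
    (hμnn : ∀ k, 0 ≤ μ k)
    (hμm : HasSum (fun k : ℕ => μ (k + 1) * (m⁻¹) ^ (k + 1)) 1)
    (hR1 : 1 ≤ R) (hRm : R < m)
    (hμR : Summable fun k : ℕ => μ (k + 1) * (R⁻¹) ^ (k + 1))
    (lam : ℂ) (hlam : R < ‖lam‖) (hlamm : lam ≠ (m : ℂ)) (hroot : genFun μ lam⁻¹ = 1)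
    (d : ℕ → ℂ)
    (hd : d = fun k : ℕ => (k : ℂ) * lam⁻¹ ^ (k + 1) / ((m : ℂ) - lam)
      - (lam⁻¹ ^ k - ((m : ℂ))⁻¹ ^ k) / ((m : ℂ) - lam) ^ 2) :
    memEllR R d ∧
    HasSum (chiSum μ d) ((1 - lam) * dgenFun μ lam⁻¹ / (((m : ℂ) - lam) * lam ^ 2)) := by
  have hR : 0 < R := zero_lt_one.trans_le hR1
  have hm : 0 < m := hR.trans hRm
  have hlam0 : lam ≠ 0 := norm_pos_iff.1 (hR.trans hlam)
  have hw : ‖lam⁻¹‖ < R⁻¹ := by rw [norm_inv]; exact inv_strictAnti₀ hR hlam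
  have hu : ‖((m : ℂ))⁻¹‖ < R⁻¹ := by
    rw [norm_inv, Complex.norm_real, Real.norm_of_nonneg hm.le]; exact inv_strictAnti₀ hR hRm
  obtain rfl : d = dSeq lam⁻¹ (m : ℂ)⁻¹ ((m : ℂ) - lam) := hd
  refine ⟨memEllR_dSeq hR hw hu _, ?_⟩
  have hμw : HasSum (fun k : ℕ => (μ (k + 1) : ℂ) * lam⁻¹ ^ (k + 1)) 1 :=
    hroot ▸ (summable_genFun_terms hμnn hμR hw.le).hasSum
  have hμu : HasSum (fun k : ℕ => (μ (k + 1) : ℂ) * ((m : ℂ))⁻¹ ^ (k + 1)) 1 := by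
    simpa using (Complex.hasSum_ofReal (f := fun k : ℕ => μ (k + 1) * m⁻¹ ^ (k + 1))).2 hμm
  convert hasSum_chiSum_dSeq (inv_ne_zero hlam0) (by simpa using hm.ne') (by simp)
    (sub_ne_zero.2 hlamm.symm) (summable_dgenFun_terms hμnn hμR hR hw).hasSum hμw hμu using 1
  rw [dgenFun]
  field_simp

/-- For `|λ| > R`, `λ ≠ m`, `μ̂(1/λ) = 1`, the sequence
`d(λ)_k = k λ^{-k-1}/(m−λ) − (λ^{-k} − m^{-k})/(m−λ)²` lies in `ℓ²_R` and
`χ(d(λ)) = (1−λ) μ̂'(1/λ) / ((m−λ) λ²)`. -/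
theorem statement14
    (μ : ℕ → ℝ) (m R : ℝ)
    (hm : 1 < m) (hμnn : ∀ k, 0 ≤ μ k)
    (hμm : HasSum (fun k : ℕ => μ (k + 1) * (m⁻¹) ^ (k + 1)) 1)
    (hR1 : 1 ≤ R) (hRm : R < m)
    (hμR : Summable fun k : ℕ => μ (k + 1) * (R⁻¹) ^ (k + 1))
    (lam : ℂ) (hlam : R < ‖lam‖) (hlamm : lam ≠ (m : ℂ)) (hroot : genFun μ lam⁻¹ = 1)
    (d : ℕ → ℂ)
    (hd : d = fun k : ℕ => (k : ℂ) * lam⁻¹ ^ (k + 1) / ((m : ℂ) - lam)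
      - (lam⁻¹ ^ k - ((m : ℂ))⁻¹ ^ k) / ((m : ℂ) - lam) ^ 2) :
    memEllR R d ∧
    HasSum (chiSum μ d) ((1 - lam) * dgenFun μ lam⁻¹ / (((m : ℂ) - lam) * lam ^ 2)) :=
  statement14_general μ m R hμnn hμm hR1 hRm hμR lam hlam hlamm hroot d hd
end
end

section
/- Suppose 1 ≤ R < m and Σ_{k≥1} μ_k R^{−k} < ∞. Let λ be complex with |λ| > R, λ ≠ m, and μ̂(1/λ) = 1. Then the kernel of λ·Id − T on ℓ²_R is one-dimensional and equals the span of the vector u_λ := (λ^{−k} − m^{−k})_{k≥0}. -/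
/-!
An eigenvector `a` of `T` for `λ ≠ 0` satisfies `a₀ = 0` and
`λ a_{k+1} = a_k + χ(a) m^{-(k+1)}`, so it is determined by the number `χ(a)`.
The sequence `u_λ` solves this recursion with `χ(u_λ) = m − λ`: the series for `χ(u_λ)`
telescopes against `μ̂(1/λ) = μ̂(1/m) = 1`. Hence every eigenvector is
`χ(a)/(m − λ) · u_λ`, and `u_λ ∈ ℓ²_R` because `|λ| > R` and `m > R`.
-/

open scoped BigOperators ENNReal

noncomputable section

theorem Tseq_zero (μ : ℕ → ℝ) (m : ℝ) (a : ℕ → ℂ) : Tseq μ m a 0 = 0 := by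
  simp [Tseq, shiftSeq, vSeq]

theorem Tseq_succ (μ : ℕ → ℝ) (m : ℝ) (a : ℕ → ℂ) (k : ℕ) :
    Tseq μ m a (k + 1) = a k + chiSeq μ a * (m : ℂ)⁻¹ ^ (k + 1) := by
  simp [Tseq, shiftSeq, vSeq]

theorem chiSeq_const_mul (μ : ℕ → ℝ) (c : ℂ) (a : ℕ → ℂ) :
    chiSeq μ (fun k => c * a k) = c * chiSeq μ a := by
  simp only [chiSeq, chiSum, ← tsum_mul_left]
  congr 1
  funext k
  ring

theorem eq_of_eigen_of_chiSeq_eq {μ : ℕ → ℝ} {m : ℝ} {lam : ℂ} (hlam : lam ≠ 0)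
    {a b : ℕ → ℂ} (ha : ∀ k, lam * a k = Tseq μ m a k) (hb : ∀ k, lam * b k = Tseq μ m b k)
    (hχ : chiSeq μ a = chiSeq μ b) : a = b := by
  funext k
  induction k with
  | zero =>
    have ha0 := ha 0
    have hb0 := hb 0
    rw [Tseq_zero, mul_eq_zero] at ha0 hb0
    rw [ha0.resolve_left hlam, hb0.resolve_left hlam]
  | succ k ih =>
    apply mul_left_cancel₀ hlam
    rw [ha, hb, Tseq_succ, Tseq_succ, ih, hχ]

theorem hasSum_chiSum_pow {μ : ℕ → ℝ} {z s : ℂ} (hz : z ≠ 0)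
    (h : HasSum (fun k => (μ (k + 1) : ℂ) * z ^ (k + 1)) s) :
    HasSum (chiSum μ (fun k => z ^ k)) (s * (1 - z⁻¹)) := by
  have hterm : chiSum μ (fun k => z ^ k)
      = fun k => (μ (k + 1) : ℂ) * z ^ (k + 1) * (1 - z⁻¹) := by
    funext k
    simp only [chiSum, pow_succ]
    linear_combination ((μ (k + 1) : ℂ) * z ^ k) * mul_inv_cancel₀ hz
  rw [hterm]
  exact h.mul_right _

theorem summable_mul_pow_of_norm_le {μ : ℕ → ℝ} (hμ : ∀ k, 0 ≤ μ k) {r : ℝ}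
    (hr : Summable fun k : ℕ => μ (k + 1) * r ^ (k + 1)) {z : ℂ} (hz : ‖z‖ ≤ r) :
    Summable fun k : ℕ => (μ (k + 1) : ℂ) * z ^ (k + 1) := by
  refine Summable.of_norm_bounded hr fun k => ?_
  rw [norm_mul, norm_pow, Complex.norm_real, Real.norm_of_nonneg (hμ _)]
  exact mul_le_mul_of_nonneg_left (pow_le_pow_left₀ (norm_nonneg _) hz _) (hμ _)

theorem memEllR.const_mul {R : ℝ} {a : ℕ → ℂ} (ha : memEllR R a) (c : ℂ) :
    memEllR R (fun k => c * a k) := by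
  simpa only [memEllR, norm_mul, mul_pow, mul_left_comm _ (‖c‖ ^ 2)] using ha.mul_left (‖c‖ ^ 2)

theorem memEllR.sub {R : ℝ} {a b : ℕ → ℂ} (ha : memEllR R a) (hb : memEllR R b) :
    memEllR R (fun k => a k - b k) := by
  refine Summable.of_nonneg_of_le (fun k => ?_) (fun k => ?_) ((ha.add hb).mul_left 2)
  · rw [pow_mul']
    positivity
  · have hR : 0 ≤ R ^ (2 * k) := by
      rw [pow_mul']
      positivity
    have hab := norm_sub_le (a k) (b k)
    have hsq : ‖a k - b k‖ ^ 2 ≤ 2 * (‖a k‖ ^ 2 + ‖b k‖ ^ 2) := by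
      nlinarith [norm_nonneg (a k - b k), sq_nonneg (‖a k‖ - ‖b k‖)]
    calc R ^ (2 * k) * ‖a k - b k‖ ^ 2 ≤ R ^ (2 * k) * (2 * (‖a k‖ ^ 2 + ‖b k‖ ^ 2)) := by
          gcongr
      _ = 2 * (R ^ (2 * k) * ‖a k‖ ^ 2 + R ^ (2 * k) * ‖b k‖ ^ 2) := by ring

theorem memEllR_inv_pow {R : ℝ} (hR : 0 ≤ R) {z : ℂ} (hz : R < ‖z‖) :
    memEllR R (fun k => z⁻¹ ^ k) := by
  have hq : (R / ‖z‖) ^ 2 < 1 := by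
    rw [sq_lt_one_iff₀ (by positivity), div_lt_one (hR.trans_lt hz)]
    exact hz
  refine (summable_geometric_of_lt_one (by positivity) hq).congr fun k => ?_
  rw [norm_pow, norm_inv, div_eq_mul_inv]
  ring

def eigenSeq (lam : ℂ) (m : ℝ) : ℕ → ℂ := fun k => lam⁻¹ ^ k - (m : ℂ)⁻¹ ^ k

section eigenSeq

variable {lam : ℂ} {m : ℝ}

theorem eigenSeq_ne_zero (h : lam ≠ m) : eigenSeq lam m ≠ 0 := by
  intro h0
  have h1 := congrFun h0 1
  rw [eigenSeq, Pi.zero_apply, pow_one, pow_one, sub_eq_zero, inv_inj] at h1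
  exact h h1

theorem mul_eigenSeq_succ (hlam : lam ≠ 0) (hm : (m : ℂ) ≠ 0) (k : ℕ) :
    lam * eigenSeq lam m (k + 1) = eigenSeq lam m k + (m - lam) * (m : ℂ)⁻¹ ^ (k + 1) := by
  simp only [eigenSeq, pow_succ]
  linear_combination lam⁻¹ ^ k * mul_inv_cancel₀ hlam - (m : ℂ)⁻¹ ^ k * mul_inv_cancel₀ hm

theorem chiSeq_eigenSeq {μ : ℕ → ℝ} (hlam : lam ≠ 0) (hm : (m : ℂ) ≠ 0)
    (hμlam : HasSum (fun k => (μ (k + 1) : ℂ) * lam⁻¹ ^ (k + 1)) 1)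
    (hμm : HasSum (fun k => (μ (k + 1) : ℂ) * (m : ℂ)⁻¹ ^ (k + 1)) 1) :
    chiSeq μ (eigenSeq lam m) = m - lam := by
  have h := (hasSum_chiSum_pow (inv_ne_zero hlam) hμlam).sub
    (hasSum_chiSum_pow (inv_ne_zero hm) hμm)
  have hsub : chiSum μ (eigenSeq lam m)
      = fun k => chiSum μ (fun k => lam⁻¹ ^ k) k - chiSum μ (fun k => (m : ℂ)⁻¹ ^ k) k := by
    funext k
    simp only [chiSum, eigenSeq]
    ring
  rw [chiSeq, hsub, h.tsum_eq, inv_inv, inv_inv]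
  ring

theorem Tseq_const_mul_eigenSeq {μ : ℕ → ℝ} (hlam : lam ≠ 0) (hm : (m : ℂ) ≠ 0)
    (hχ : chiSeq μ (eigenSeq lam m) = m - lam) (c : ℂ) (k : ℕ) :
    lam * (c * eigenSeq lam m k) = Tseq μ m (fun k => c * eigenSeq lam m k) k := by
  cases k with
  | zero => simp [Tseq_zero, eigenSeq]
  | succ k =>
    rw [Tseq_succ, chiSeq_const_mul, hχ]
    linear_combination c * mul_eigenSeq_succ hlam hm k

theorem memEllR_eigenSeq {R : ℝ} (hR : 0 ≤ R) (hlam : R < ‖lam‖) (hRm : R < m) :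
    memEllR R (eigenSeq lam m) :=
  (memEllR_inv_pow hR hlam).sub
    (memEllR_inv_pow hR (by rwa [Complex.norm_real, Real.norm_of_nonneg (hR.trans hRm.le)]))

end eigenSeq

theorem statement15_general
    (μ : ℕ → ℝ) (m R : ℝ)
    (hμnn : ∀ k, 0 ≤ μ k)
    (hμm : HasSum (fun k : ℕ => μ (k + 1) * (m⁻¹) ^ (k + 1)) 1)
    (hR1 : 1 ≤ R) (hRm : R < m)
    (hμR : Summable fun k : ℕ => μ (k + 1) * (R⁻¹) ^ (k + 1))
    (lam : ℂ) (hlam : R < ‖lam‖) (hlamm : lam ≠ (m : ℂ)) (hroot : genFun μ lam⁻¹ = 1)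
    (u : ℕ → ℂ) (hu : u = fun k : ℕ => lam⁻¹ ^ k - ((m : ℂ))⁻¹ ^ k) :
    u ≠ 0 ∧
    {a : ℕ → ℂ | memEllR R a ∧ ∀ k, lam * a k - Tseq μ m a k = 0}
      = {a : ℕ → ℂ | ∃ c : ℂ, a = fun k => c * u k} := by
  obtain rfl : u = eigenSeq lam m := hu
  have hR0 : 0 < R := by linarith
  have hlam0 : lam ≠ 0 := norm_pos_iff.mp (hR0.trans hlam)
  have hm0 : (m : ℂ) ≠ 0 := Complex.ofReal_ne_zero.mpr (hR0.trans hRm).ne'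
  have hμlam : HasSum (fun k => (μ (k + 1) : ℂ) * lam⁻¹ ^ (k + 1)) 1 :=
    (summable_mul_pow_of_norm_le hμnn hμR (by rw [norm_inv]; gcongr)).hasSum_iff.mpr hroot
  have hχ := chiSeq_eigenSeq hlam0 hm0 hμlam
    (by simpa using Complex.hasSum_ofReal.mpr hμm)
  have heigen := Tseq_const_mul_eigenSeq (μ := μ) hlam0 hm0 hχ
  refine ⟨eigenSeq_ne_zero hlamm, Set.ext fun a => ⟨?_, ?_⟩⟩
  · rintro ⟨-, ha⟩
    refine ⟨chiSeq μ a / (m - lam),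
      eq_of_eigen_of_chiSeq_eq hlam0 (fun k => sub_eq_zero.mp (ha k)) (heigen _) ?_⟩
    rw [chiSeq_const_mul, hχ, div_mul_cancel₀ _ (sub_ne_zero.mpr hlamm.symm)]
  · rintro ⟨c, rfl⟩
    exact ⟨(memEllR_eigenSeq hR0.le hlam hRm).const_mul c,
      fun k => sub_eq_zero.mpr (heigen c k)⟩

/-- For `|λ| > R`, `λ ≠ m`, `μ̂(1/λ) = 1`, the kernel of `λ·Id − T` on `ℓ²_R`
is one-dimensional and spanned by `u_λ = (λ^{-k} − m^{-k})_k`. -/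
theorem statement15
    (μ : ℕ → ℝ) (m R : ℝ)
    (hm : 1 < m) (hμnn : ∀ k, 0 ≤ μ k)
    (hμm : HasSum (fun k : ℕ => μ (k + 1) * (m⁻¹) ^ (k + 1)) 1)
    (hR1 : 1 ≤ R) (hRm : R < m)
    (hμR : Summable fun k : ℕ => μ (k + 1) * (R⁻¹) ^ (k + 1))
    (lam : ℂ) (hlam : R < ‖lam‖) (hlamm : lam ≠ (m : ℂ)) (hroot : genFun μ lam⁻¹ = 1)
    (u : ℕ → ℂ) (hu : u = fun k : ℕ => lam⁻¹ ^ k - ((m : ℂ))⁻¹ ^ k) :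
    u ≠ 0 ∧
    {a : ℕ → ℂ | memEllR R a ∧ ∀ k, lam * a k - Tseq μ m a k = 0}
      = {a : ℕ → ℂ | ∃ c : ℂ, a = fun k => c * u k} :=
  statement15_general μ m R hμnn hμm hR1 hRm hμR lam hlam hlamm hroot u hu
end
end
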